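/- Let c be a positive real number such that c^N ∈ ℚ for some positive integer N and c ∉ ℚ. Let s be the smallest positive integer with c^s ∈ ℚ, and set k = c^s. Then the minimal polynomial of c over ℚ is X^s − k. -/

import Mathlib

/-!
The minimal polynomial `p` of `c` divides `X ^ s - k`, so every complex root `z` of `p` satisfies
`z ^ s = k = c ^ s` and hence `‖z‖ = c`. The constant coefficient of `p` is, up to sign, the
product of its `d = deg p` roots, so `c ^ d` is rational, and minimality of `s` gives `s ≤ d`.
A monic divisor of `X ^ s - k` of degree at least `s` is `X ^ s - k` itself.
-/

open Polynomial

theorem Polynomial.Splits.norm_coeff_zero_of_forall_norm_root_eq {K : Type*} [NormedField K]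
    {P : K[X]} (hsplit : P.Splits) (hmonic : P.Monic) {r : ℝ}
    (hroots : ∀ z ∈ P.roots, ‖z‖ = r) : ‖P.coeff 0‖ = r ^ P.natDegree := by
  have hnorms : P.roots.map (‖·‖) = Multiset.replicate P.natDegree r := by
    rw [Multiset.map_congr rfl hroots, Multiset.map_const', hsplit.natDegree_eq_card_roots]
  rw [hsplit.coeff_zero_eq_prod_roots_of_monic hmonic, norm_mul, norm_pow, norm_neg, norm_one,
    one_pow, one_mul, ← normHom_apply, map_multiset_prod]
  exact hnorms ▸ Multiset.prod_replicate _ _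

theorem pow_natDegree_eq_abs_coeff_zero_of_dvd_X_pow_sub_C {x : ℝ} (hx : 0 ≤ x) {n : ℕ}
    (hn : n ≠ 0) {a : ℚ} (ha : x ^ n = a) {p : ℚ[X]} (hmonic : p.Monic)
    (hdvd : p ∣ X ^ n - C a) : x ^ p.natDegree = ((|p.coeff 0| : ℚ) : ℝ) := by
  set P := p.map (algebraMap ℚ ℂ)
  have hroots : ∀ z ∈ P.roots, ‖z‖ = x := by
    intro z hz
    have hzn : z ^ n = (x : ℂ) ^ n := by
      have := eval_eq_zero_of_dvd_of_eval_eq_zero (Polynomial.map_dvd (algebraMap ℚ ℂ) hdvd)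
        ((mem_roots (hmonic.map _).ne_zero).1 hz)
      rw [← Complex.ofReal_pow, ha]
      simpa [sub_eq_zero] using this
    refine (pow_left_inj₀ (norm_nonneg z) hx hn).1 ?_
    rw [← norm_pow, hzn, norm_pow, Complex.norm_real, Real.norm_of_nonneg hx]
  have hcoeff := (IsAlgClosed.splits P).norm_coeff_zero_of_forall_norm_root_eq (hmonic.map _) hroots
  rw [natDegree_map, coeff_map] at hcoeff
  rw [← hcoeff]
  simp

theorem minpoly_of_min_power_rational_general (c : ℝ) (hc : 0 < c)
    (s : ℕ) (hs : 0 < s) (k : ℚ) (hk : c ^ s = (k : ℝ))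
    (hmin : ∀ n : ℕ, 0 < n → (∃ r : ℚ, c ^ n = (r : ℝ)) → s ≤ n) :
    minpoly ℚ c = X ^ s - C k := by
  have hmonic : (X ^ s - C k : ℚ[X]).Monic := monic_X_pow_sub_C k hs.ne'
  have hroot : aeval c (X ^ s - C k : ℚ[X]) = 0 := by simp [hk]
  have hint : IsIntegral ℚ c := ⟨_, hmonic, hroot⟩
  have hdvd : minpoly ℚ c ∣ X ^ s - C k := minpoly.dvd ℚ c hroot
  have hdeg : s ≤ (minpoly ℚ c).natDegree :=
    hmin _ (minpoly.natDegree_pos hint)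
      ⟨_, pow_natDegree_eq_abs_coeff_zero_of_dvd_X_pow_sub_C hc.le hs.ne' hk (minpoly.monic hint)
        hdvd⟩
  refine (eq_of_monic_of_dvd_of_natDegree_le (minpoly.monic hint) hmonic hdvd ?_).symm
  rwa [natDegree_X_pow_sub_C]

theorem minpoly_of_min_power_rational (c : ℝ) (hc : 0 < c)
    (N : ℕ) (hN : 0 < N) (hcN : ∃ r : ℚ, c ^ N = (r : ℝ))
    (hirr : Irrational c)
    (s : ℕ) (hs : 0 < s) (k : ℚ) (hk : c ^ s = (k : ℝ))
    (hmin : ∀ n : ℕ, 0 < n → (∃ r : ℚ, c ^ n = (r : ℝ)) → s ≤ n) :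
    minpoly ℚ c = X ^ s - C k :=
  minpoly_of_min_power_rational_general c hc s hs k hk hmin
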